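/- arXiv:1712.07419 — 6 statements merged into one kernel-verified Lean document; each statement's English description precedes it below -/
import Mathlib

section
/- For the threshold policy with threshold X̄ ∈ {1,2,...} and arrival probability p ∈ (0,1], the stationary distribution ξ of the post-action age Markov chain (which increases by 1 deterministically for ages 1,...,X̄−1, and from any age i ≥ X̄ resets to 1 with probability p or increases by 1 with probability 1−p) is given by ξ_i = 1/(X̄ + (1−p)/p) for i = 1,...,X̄ and ξ_i = (1−p)^{i−X̄}/(X̄ + (1−p)/p) for i > X̄; in particular these values are nonnegative and sum to 1, and they satisfy the balance equations of the chain. -/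
/-! With `D = X̄ + (1 - p)/p`, the weights are `1/D` on the deterministic stretch `1, …, X̄` and decay
geometrically with ratio `1 - p` from `X̄` on. Balance at `j ≥ 2` is then a direct check, the mass is
`X̄/D + ((1 - p)/p)/D = 1`, and the flux back to state `1` is `p · (1/D) · ∑ₖ (1 - p)ᵏ = 1/D = ξ₁`. -/

open Finset

theorem hasSum_of_geometric_tail {f : ℕ → ℝ} {a r : ℝ} (N : ℕ) (hr : |r| < 1)
    (hf : ∀ k, f (k + N) = a * r ^ k) :
    HasSum f (∑ i ∈ range N, f i + a * (1 - r)⁻¹) := by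
  rw [← hasSum_nat_add_iff' N, add_sub_cancel_left]
  simpa only [hf] using (hasSum_geometric_of_abs_lt_one hr).mul_left a

theorem abs_one_sub_lt_one {p : ℝ} (hp : 0 < p) (hp2 : p < 2) : |1 - p| < 1 :=
  abs_lt.mpr ⟨by linarith, by linarith⟩

noncomputable def thresholdNormalizer (p : ℝ) (X : ℕ) : ℝ := (X : ℝ) + (1 - p) / p

noncomputable def thresholdStationary (p : ℝ) (X i : ℕ) : ℝ :=
  if i ≤ X then 1 / thresholdNormalizer p X else (1 - p) ^ (i - X) / thresholdNormalizer p X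

variable {p : ℝ} {X : ℕ}

theorem thresholdNormalizer_pos (hp : 0 < p) (hp1 : p ≤ 1) (hX : 1 ≤ X) :
    0 < thresholdNormalizer p X := by
  have : (1 : ℝ) ≤ X := by exact_mod_cast hX
  have : 0 ≤ (1 - p) / p := div_nonneg (by linarith) hp.le
  unfold thresholdNormalizer
  linarith

namespace thresholdStationary

theorem of_le {i : ℕ} (hi : i ≤ X) : thresholdStationary p X i = 1 / thresholdNormalizer p X :=
  if_pos hi

theorem add_threshold (k : ℕ) :
    thresholdStationary p X (k + X) = (1 - p) ^ k / thresholdNormalizer p X := by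
  unfold thresholdStationary
  split_ifs with h
  · obtain rfl : k = 0 := by omega
    simp
  · rw [Nat.add_sub_cancel]

theorem nonneg (hp : 0 < p) (hp1 : p ≤ 1) (hX : 1 ≤ X) (i : ℕ) :
    0 ≤ thresholdStationary p X i := by
  have := thresholdNormalizer_pos hp hp1 hX
  have : 0 ≤ 1 - p := by linarith
  unfold thresholdStationary
  split_ifs <;> positivity

theorem succ (i : ℕ) :
    thresholdStationary p X (i + 1) =
      if i < X then thresholdStationary p X i else (1 - p) * thresholdStationary p X i := by
  split_ifs with h
  · rw [of_le h, of_le h.le]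
  · obtain ⟨k, rfl⟩ := Nat.exists_eq_add_of_le' (not_lt.mp h)
    rw [add_right_comm, add_threshold, add_threshold, pow_succ]
    ring

end thresholdStationary

section

variable {ξ : ℕ → ℝ}

theorem hasSum_stationary_mass (hp : 0 < p) (hp1 : p ≤ 1) (hX : 1 ≤ X)
    (hξ : ∀ i, 1 ≤ i → ξ i = thresholdStationary p X i) :
    HasSum (fun i => if 1 ≤ i then ξ i else 0) 1 := by
  have tail : ∀ k, (if 1 ≤ k + (X + 1) then ξ (k + (X + 1)) else 0) =
      (1 - p) / thresholdNormalizer p X * (1 - p) ^ k := by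
    intro k
    rw [if_pos (by omega), hξ _ (by omega), ← add_assoc, add_right_comm,
      thresholdStationary.add_threshold, pow_succ]
    ring
  have head :
      ∑ i ∈ range (X + 1), (if 1 ≤ i then ξ i else 0) = X * (1 / thresholdNormalizer p X) := by
    have : ∀ i ∈ range X, (if 1 ≤ i + 1 then ξ (i + 1) else 0) = 1 / thresholdNormalizer p X :=
      fun i hi => by
        rw [if_pos (by omega), hξ _ (by omega), thresholdStationary.of_le (by simp at hi; omega)]
    rw [sum_range_succ', if_neg (by omega), add_zero, sum_congr rfl this, sum_const, card_range,
      nsmul_eq_mul]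
  have hD := thresholdNormalizer_pos hp hp1 hX
  convert hasSum_of_geometric_tail (f := fun i => if 1 ≤ i then ξ i else 0) (X + 1)
    (abs_one_sub_lt_one hp (by linarith)) tail using 1
  rw [head, sub_sub_cancel]
  field_simp
  unfold thresholdNormalizer
  field_simp

theorem hasSum_stationary_flux (hp : 0 < p) (hp1 : p ≤ 1) (hX : 1 ≤ X)
    (hξ : ∀ i, 1 ≤ i → ξ i = thresholdStationary p X i) :
    HasSum (fun i => if X ≤ i then p * ξ i else 0) (ξ 1) := by
  have tail : ∀ k, (if X ≤ k + X then p * ξ (k + X) else 0) =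
      p / thresholdNormalizer p X * (1 - p) ^ k := by
    intro k
    rw [if_pos (by omega), hξ _ (by omega), thresholdStationary.add_threshold]
    ring
  have head : ∑ i ∈ range X, (if X ≤ i then p * ξ i else 0) = 0 :=
    sum_eq_zero fun i hi => if_neg (by simp at hi; omega)
  have hD := thresholdNormalizer_pos hp hp1 hX
  convert hasSum_of_geometric_tail (f := fun i => if X ≤ i then p * ξ i else 0) X
    (abs_one_sub_lt_one hp (by linarith)) tail using 1
  rw [head, zero_add, sub_sub_cancel, hξ 1 le_rfl, thresholdStationary.of_le hX]
  field_simp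

theorem stationary_balance (hξ : ∀ i, 1 ≤ i → ξ i = thresholdStationary p X i) (j : ℕ)
    (hj : 2 ≤ j) : ξ j = if j - 1 < X then ξ (j - 1) else (1 - p) * ξ (j - 1) := by
  obtain ⟨i, rfl⟩ := Nat.exists_eq_add_of_le' (by omega : 1 ≤ j)
  rw [Nat.add_sub_cancel, hξ _ (by omega), hξ i (by omega), thresholdStationary.succ]

end

/-- Stationary distribution of the post-action-age Markov chain under the
threshold policy with threshold `X` and arrival probability `p`. -/
theorem stmt_0 (p : ℝ) (hp : 0 < p) (hp1 : p ≤ 1) (X : ℕ) (hX : 1 ≤ X)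
    (ξ : ℕ → ℝ)
    (hξ : ∀ i, 1 ≤ i →
      ξ i = if i ≤ X then 1 / ((X : ℝ) + (1 - p) / p)
            else (1 - p) ^ (i - X) / ((X : ℝ) + (1 - p) / p)) :
    (∀ i, 1 ≤ i → 0 ≤ ξ i) ∧
    (∑' i : ℕ, (if 1 ≤ i then ξ i else 0)) = 1 ∧
    ξ 1 = (∑' i : ℕ, (if X ≤ i then p * ξ i else 0)) ∧
    (∀ j, 2 ≤ j → ξ j = if j - 1 < X then ξ (j - 1) else (1 - p) * ξ (j - 1)) := by
  replace hξ : ∀ i, 1 ≤ i → ξ i = thresholdStationary p X i := hξ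
  refine ⟨fun i hi => ?_, (hasSum_stationary_mass hp hp1 hX hξ).tsum_eq,
    (hasSum_stationary_flux hp hp1 hX hξ).tsum_eq.symm, stationary_balance hξ⟩
  rw [hξ i hi]
  exact thresholdStationary.nonneg hp hp1 hX i
end

section
/- With the stationary distribution ξ_i = 1/(X̄ + (1−p)/p) for i ≤ X̄ and ξ_i = (1−p)^{i−X̄}/(X̄ + (1−p)/p) for i > X̄, the expected cost (1+c)·ξ_1 + Σ_{i=2}^∞ i·ξ_i equals ( X̄²/2 + (1/p − 1/2)·X̄ + 1/p² − 1/p + c ) / ( X̄ + (1−p)/p ). -/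
/-- The average cost of the threshold-`X` policy, computed from the stationary
distribution of the post-action-age chain. -/
theorem stmt_1 (p : ℝ) (hp : 0 < p) (hp1 : p ≤ 1) (c : ℝ) (hc : 0 ≤ c)
    (X : ℕ) (hX : 1 ≤ X) (ξ : ℕ → ℝ)
    (hξ : ∀ i, 1 ≤ i →
      ξ i = if i ≤ X then 1 / ((X : ℝ) + (1 - p) / p)
            else (1 - p) ^ (i - X) / ((X : ℝ) + (1 - p) / p)) :
    (1 + c) * ξ 1 + (∑' i : ℕ, (if 2 ≤ i then (i : ℝ) * ξ i else 0)) =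
      ((X : ℝ) ^ 2 / 2 + (1 / p - 1 / 2) * X + 1 / p ^ 2 - 1 / p + c) /
        ((X : ℝ) + (1 - p) / p) := by
  have hp0 : p ≠ 0 := ne_of_gt hp
  set q : ℝ := 1 - p with hq
  have hq0 : 0 ≤ q := by simp [hq]; linarith
  have hq1 : q < 1 := by simp [hq]; linarith
  have h1q : 1 - q = p := by rw [hq]; ring
  set D : ℝ := (X : ℝ) + (1 - p) / p with hDdef
  have hX1 : (1 : ℝ) ≤ (X : ℝ) := by exact_mod_cast hX
  have hD : 0 < D := by
    have : 0 ≤ (1 - p) / p := div_nonneg (by linarith) (le_of_lt hp)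
    rw [hDdef]; linarith
  have hD0 : D ≠ 0 := ne_of_gt hD
  set f : ℕ → ℝ := fun i => if 2 ≤ i then (i : ℝ) * ξ i else 0 with hf
  -- tail values
  have hF : ∀ i : ℕ, f (i + (X + 1)) = ((i : ℝ) + X + 1) * q ^ (i + 1) / D := by
    intro i
    have h2 : 2 ≤ i + (X + 1) := by omega
    have hgt : ¬ (i + (X + 1) ≤ X) := by omega
    have hsub : i + (X + 1) - X = i + 1 := by omega
    simp only [hf, if_pos h2, hξ (i + (X + 1)) (by omega), if_neg hgt, hsub]
    push_cast
    ring
  -- tail HasSum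
  have hnorm : ‖q‖ < 1 := by rw [Real.norm_eq_abs, abs_of_nonneg hq0]; exact hq1
  have h1 : HasSum (fun i : ℕ => (i : ℝ) * q ^ i) (q / (1 - q) ^ 2) :=
    hasSum_coe_mul_geometric_of_norm_lt_one hnorm
  have h2 : HasSum (fun i : ℕ => q ^ i) (1 - q)⁻¹ :=
    hasSum_geometric_of_lt_one hq0 hq1
  have hTail : HasSum (fun i => f (i + (X + 1)))
      ((q / (1 - q) ^ 2 * q + ((X : ℝ) + 1) * q * (1 - q)⁻¹) / D) := by
    have := ((h1.mul_right q).add ((h2.mul_left (((X : ℝ) + 1) * q)))).div_const D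
    refine this.congr_fun fun i => ?_
    rw [hF i]
    ring
  have hSummable : Summable f := (summable_nat_add_iff (X + 1)).mp hTail.summable
  have hsplit : ∑' i, f i = ∑ i ∈ Finset.range (X + 1), f i + ∑' i, f (i + (X + 1)) :=
    (Summable.sum_add_tsum_nat_add (X + 1) hSummable).symm
  -- head sum
  have hheadval : ∀ i ∈ Finset.range (X + 1),
      f i = (i : ℝ) / D - (if i = 1 then 1 / D else 0) := by
    intro i hi
    rw [Finset.mem_range] at hi
    rcases Nat.lt_or_ge i 2 with h | h
    · interval_cases i <;> simp [hf]
    · have hiX : i ≤ X := by omega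
      simp only [hf, if_pos h, hξ i (by omega), if_pos hiX, if_neg (by omega : ¬ i = 1)]
      ring
  have hhead : ∑ i ∈ Finset.range (X + 1), f i = ((X : ℝ) * (X + 1) / 2 - 1) / D := by
    rw [Finset.sum_congr rfl hheadval, Finset.sum_sub_distrib]
    have h1mem : 1 ∈ Finset.range (X + 1) := by simp; omega
    rw [Finset.sum_ite_eq' (Finset.range (X + 1)) 1 (fun _ => 1 / D), if_pos h1mem]
    have hsum : ∑ i ∈ Finset.range (X + 1), (i : ℝ) = (X : ℝ) * (X + 1) / 2 := by
      have := Finset.sum_range_id_mul_two (X + 1)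
      have hcast : ((∑ i ∈ Finset.range (X + 1), i : ℕ) : ℝ) * 2 = ((X + 1) * X : ℕ) := by
        exact_mod_cast congrArg (Nat.cast : ℕ → ℝ) this
      push_cast at hcast
      linarith
    rw [← Finset.sum_div, hsum]
    ring
  have hξ1 : ξ 1 = 1 / D := by rw [hξ 1 le_rfl, if_pos hX]
  rw [hsplit, hhead, hTail.tsum_eq, hξ1, h1q]
  rw [hDdef]
  field_simp
  ring
end

section
/- For the average-cost function 𝒞(X̄) = ( X̄²/2 + (1/p − 1/2)X̄ + 1/p² − 1/p + c ) / ( X̄ + (1−p)/p ), the equation 𝒞(x) = 𝒞(x+1) (viewing x as a real variable with x ≥ 1) holds if and only if c = x²/2 − x/2 + x/p. -/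
/-! Write `d = x + (1 - p)/p = x - 1 + 1/p` for the denominator of `𝒞(x)`. Passing from `x`
to `x + 1` adds `x + 1/p = d + 1` to the numerator and `1` to the denominator, and
`a / d = (a + b) / (d + 1)` holds exactly when `a = b d`. So `𝒞(x) = 𝒞(x+1)` says that the
numerator of `𝒞(x)` equals `d (d + 1)`, which is linear in `c`. -/

theorem div_eq_add_div_add_one_iff {K : Type*} [Field K] {a b d : K} (hd : d ≠ 0)
    (hd1 : d + 1 ≠ 0) : a / d = (a + b) / (d + 1) ↔ a = b * d := by
  rw [div_eq_div_iff hd hd1]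
  constructor <;> intro h <;> linear_combination h

theorem stmt_3_general (p : ℝ) (hp : 0 < p) (c : ℝ) (x : ℝ) (hx : 1 ≤ x) :
    (x ^ 2 / 2 + (1 / p - 1 / 2) * x + 1 / p ^ 2 - 1 / p + c) / (x + (1 - p) / p) =
      ((x + 1) ^ 2 / 2 + (1 / p - 1 / 2) * (x + 1) + 1 / p ^ 2 - 1 / p + c) /
        ((x + 1) + (1 - p) / p)
    ↔ c = x ^ 2 / 2 - x / 2 + x / p := by
  have hshift : (1 - p) / p = 1 / p - 1 := by field_simp
  have hd : 0 < x + (1 - p) / p := by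
    rw [hshift]
    linarith [one_div_pos.mpr hp]
  have hnum : (x + 1) ^ 2 / 2 + (1 / p - 1 / 2) * (x + 1) + 1 / p ^ 2 - 1 / p + c =
      (x ^ 2 / 2 + (1 / p - 1 / 2) * x + 1 / p ^ 2 - 1 / p + c) + (x + 1 / p) := by ring
  have hden : (x + 1) + (1 - p) / p = (x + (1 - p) / p) + 1 := by ring
  rw [hnum, hden, div_eq_add_div_add_one_iff hd.ne' (by linarith), hshift]
  constructor <;> intro h <;> linear_combination h

/-- The indifference equation `𝒞(x) = 𝒞(x+1)` holds iff `c` equals the Whittle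
index `x²/2 − x/2 + x/p`. -/
theorem stmt_3 (p : ℝ) (hp : 0 < p) (hp1 : p ≤ 1) (c : ℝ) (x : ℝ) (hx : 1 ≤ x) :
    (x ^ 2 / 2 + (1 / p - 1 / 2) * x + 1 / p ^ 2 - 1 / p + c) / (x + (1 - p) / p) =
      ((x + 1) ^ 2 / 2 + (1 / p - 1 / 2) * (x + 1) + 1 / p ^ 2 - 1 / p + c) /
        ((x + 1) + (1 - p) / p)
    ↔ c = x ^ 2 / 2 - x / 2 + x / p :=
  stmt_3_general p hp c x hx
end

section
/- The decoupled subproblem is indexable: define S(c) ⊆ ℕ≥1 × {0,1} by S(c) = { (x,0) : x ≥ 1 } ∪ { (x,1) : 1 ≤ x < X̄*(c) } for c ≥ 0, and S(c) = ∅ for c < 0, where X̄*(c) is the optimal threshold satisfying I(X̄*(c)−1) ≤ c < I(X̄*(c)). Then S is monotone: c₁ ≤ c₂ implies S(c₁) ⊆ S(c₂); moreover ∪_{c ≥ 0} S(c) equals the entire state space ℕ≥1 × {0,1}. -/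
/-- Whittle index at integer age `x` (with `I 0 = 0`). -/
noncomputable def whittleIdx (p : ℝ) (x : ℕ) : ℝ :=
  (x : ℝ) ^ 2 / 2 - (x : ℝ) / 2 + (x : ℝ) / p

/-- Indexability of the decoupled subproblem: the set `S(c)` of states where it
is optimal to idle grows monotonically from the empty set to the whole state
space as the update cost `c` increases. States are pairs `(x, λ)` with age
`x ≥ 1` and arrival indicator `λ ∈ {0,1}`. -/
theorem stmt_8 (p : ℝ) (hp : 0 < p) (hp1 : p ≤ 1)
    (Xs : ℝ → ℕ)
    (hXs : ∀ c : ℝ, 0 ≤ c →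
      1 ≤ Xs c ∧ whittleIdx p (Xs c - 1) ≤ c ∧ c < whittleIdx p (Xs c))
    (S : ℝ → Set (ℕ × ℕ))
    (hS : ∀ c : ℝ, S c =
      if 0 ≤ c then
        {s : ℕ × ℕ | 1 ≤ s.1 ∧ (s.2 = 0 ∨ (s.2 = 1 ∧ s.1 < Xs c))}
      else ∅) :
    (∀ c₁ c₂ : ℝ, c₁ ≤ c₂ → S c₁ ⊆ S c₂) ∧
    (⋃ c ∈ Set.Ici (0 : ℝ), S c) = {s : ℕ × ℕ | 1 ≤ s.1 ∧ s.2 ≤ 1} := by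
  have hmono : StrictMono (whittleIdx p) := by
    apply strictMono_nat_of_lt_succ
    intro n
    have h1 : (0:ℝ) < 1/p := by positivity
    have : ((n:ℝ)+1)^2/2 - ((n:ℝ)+1)/2 + ((n:ℝ)+1)/p
        = ((n:ℝ)^2/2 - (n:ℝ)/2 + (n:ℝ)/p) + ((n:ℝ) + 1/p) := by ring
    simp only [whittleIdx, Nat.cast_succ]
    rw [this]
    have : (0:ℝ) ≤ (n:ℝ) := Nat.cast_nonneg n
    linarith
  have hXmono : ∀ c₁ c₂ : ℝ, 0 ≤ c₁ → c₁ ≤ c₂ → Xs c₁ ≤ Xs c₂ := by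
    intro c₁ c₂ h0 h12
    by_contra h
    push_neg at h
    have h2 : Xs c₂ ≤ Xs c₁ - 1 := by omega
    have := (hXs c₁ h0).2.1
    have := (hXs c₂ (le_trans h0 h12)).2.2
    have := hmono.monotone h2
    linarith
  constructor
  · intro c₁ c₂ h12 s hs
    rw [hS c₁] at hs
    rw [hS c₂]
    by_cases h0 : 0 ≤ c₁
    · rw [if_pos h0] at hs
      rw [if_pos (le_trans h0 h12)]
      obtain ⟨h1, h2⟩ := hs
      refine ⟨h1, ?_⟩
      rcases h2 with h | ⟨h, hlt⟩
      · exact Or.inl h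
      · exact Or.inr ⟨h, lt_of_lt_of_le hlt (hXmono c₁ c₂ h0 h12)⟩
    · rw [if_neg h0] at hs
      exact absurd hs (Set.notMem_empty s)
  · ext s
    simp only [Set.mem_iUnion, Set.mem_setOf_eq, Set.mem_Ici]
    constructor
    · rintro ⟨c, hc, hs⟩
      rw [hS c, if_pos hc] at hs
      obtain ⟨h1, h2⟩ := hs
      refine ⟨h1, ?_⟩
      rcases h2 with h | ⟨h, _⟩ <;> omega
    · rintro ⟨h1, h2⟩
      rcases Nat.lt_or_ge s.2 1 with h | h
      · refine ⟨0, le_refl 0, ?_⟩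
        rw [hS 0, if_pos (le_refl 0)]
        exact ⟨h1, Or.inl (by omega)⟩
      · have hs2 : s.2 = 1 := by omega
        set c := whittleIdx p s.1 with hc
        have hcpos : 0 ≤ c := by
          have h1' : (1:ℝ) ≤ (s.1:ℝ) := by exact_mod_cast h1
          have : (0:ℝ) < (s.1:ℝ)/p := by positivity
          have hsq : (s.1:ℝ)/2 ≤ (s.1:ℝ)^2/2 := by nlinarith
          simp only [hc, whittleIdx]
          linarith
        refine ⟨c, hcpos, ?_⟩
        rw [hS c, if_pos hcpos]
        refine ⟨h1, Or.inr ⟨hs2, ?_⟩⟩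
        have := (hXs c hcpos).2.2
        exact hmono.lt_iff_lt.mp this
end

section
/- In the discounted single-user subproblem, if J_α(x, λ) is nondecreasing in x for each fixed λ, then the optimal policy is threshold-type on states with λ = 1: if updating is optimal at (x,1), i.e. 1 + c + αE[J_α(1,λ')] ≤ x + 1 + αE[J_α(x+1,λ')], then updating is also optimal at (x+1,1), i.e. 1 + c + αE[J_α(1,λ')] ≤ x + 2 + αE[J_α(x+2,λ')]. -/
/-- Threshold structure of the optimal policy in the discounted single-user
subproblem: if `J_α(x,λ)` is nondecreasing in `x` for each `λ`, and updating is
optimal at `(x,1)`, then updating is optimal at `(x+1,1)`. Here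
`E[J_α(y,λ')] = p·J_α(y,1) + (1−p)·J_α(y,0)`. -/
theorem stmt_13 (p : ℝ) (hp : 0 < p) (hp1 : p ≤ 1) (c : ℝ) (hc : 0 ≤ c)
    (α : ℝ) (hα0 : 0 < α) (hα1 : α < 1)
    (J : ℕ → Bool → ℝ)
    (hmono : ∀ lam : Bool, Monotone (fun x => J x lam))
    (x : ℕ) (hx : 1 ≤ x)
    (hupd : 1 + c + α * (p * J 1 true + (1 - p) * J 1 false) ≤
            (x : ℝ) + 1 + α * (p * J (x + 1) true + (1 - p) * J (x + 1) false)) :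
    1 + c + α * (p * J 1 true + (1 - p) * J 1 false) ≤
      (x : ℝ) + 2 + α * (p * J (x + 2) true + (1 - p) * J (x + 2) false) := by
  have h1 := hmono true (Nat.le_succ (x+1))
  have h2 := hmono false (Nat.le_succ (x+1))
  simp only [] at h1 h2
  nlinarith [mul_le_mul_of_nonneg_left h1 hp.le, mul_le_mul_of_nonneg_left h2 (by linarith : (0:ℝ) ≤ 1-p), hα0.le]
end

section
/- In the discounted N-user broadcast MDP, if V_α is nondecreasing in each age coordinate, then the optimal policy is switch-type: defining ν_α(s; d) = C(s,d) + αE[V_α(s')], if ν_α(x₁, x_{−1}, λ; 1) ≤ ν_α(x₁, x_{−1}, λ; j) for all j ≠ 1 at a state with λ₁ = 1 (updating user 1 is optimal), then ν_α(x₁+1, x_{−1}, λ; 1) ≤ ν_α(x₁+1, x_{−1}, λ; j) for all j ≠ 1 (updating user 1 remains optimal when user 1's age increases by one). -/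
/-- Next ages: user `d`'s age resets to 1 if scheduled with an arrival;
otherwise each age increments. -/
def nextAges {N : ℕ} (x : Fin N → ℕ) (lam : Fin N → Bool) (d : Option (Fin N)) :
    Fin N → ℕ :=
  fun i => if d = some i ∧ lam i = true then 1 else x i + 1

/-- Immediate cost `C(s,d) = Σᵢ (xᵢ + 1) − x_d·λ_d`. -/
def mdpCost {N : ℕ} (x : Fin N → ℕ) (lam : Fin N → Bool) (d : Option (Fin N)) : ℝ :=
  (∑ i, ((x i : ℝ) + 1)) -
    (match d with
     | none => 0
     | some j => if lam j = true then (x j : ℝ) else 0)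

/-- Probability of arrival vector `lam'` under independent Bernoulli(`p i`). -/
def arrWeight {N : ℕ} (p : Fin N → ℝ) (lam' : Fin N → Bool) : ℝ :=
  ∏ i, (if lam' i = true then p i else 1 - p i)

/-- One-step cost-to-go `ν_α(s; d) = C(s,d) + α E[V_α(s')]`. -/
noncomputable def nu {N : ℕ} (p : Fin N → ℝ) (α : ℝ)
    (V : (Fin N → ℕ) → (Fin N → Bool) → ℝ)
    (x : Fin N → ℕ) (lam : Fin N → Bool) (d : Option (Fin N)) : ℝ :=
  mdpCost x lam d +
    α * ∑ lam' : Fin N → Bool, arrWeight p lam' * V (nextAges x lam d) lam'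

/-- Switch-type structure: if the optimal discounted value function `V_α` is
nondecreasing in each age coordinate and updating user `u` (with an arrival) is
optimal at ages `x`, then updating user `u` remains optimal when `u`'s age is
increased by one. -/
theorem stmt_14 (N : ℕ) (hN : 1 ≤ N) (p : Fin N → ℝ)
    (hp : ∀ i, 0 < p i ∧ p i ≤ 1) (α : ℝ) (hα0 : 0 < α) (hα1 : α < 1)
    (V : (Fin N → ℕ) → (Fin N → Bool) → ℝ)
    (hmono : ∀ (lam : Fin N → Bool) (i : Fin N) (x y : Fin N → ℕ),
      (∀ j, j ≠ i → x j = y j) → x i ≤ y i → V x lam ≤ V y lam)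
    (x : Fin N → ℕ) (hx : ∀ i, 1 ≤ x i) (lam : Fin N → Bool)
    (u : Fin N) (hu : lam u = true)
    (hopt : ∀ j : Fin N, j ≠ u → nu p α V x lam (some u) ≤ nu p α V x lam (some j)) :
    ∀ j : Fin N, j ≠ u →
      nu p α V (Function.update x u (x u + 1)) lam (some u) ≤
        nu p α V (Function.update x u (x u + 1)) lam (some j) := by
  intro j hj
  set x' := Function.update x u (x u + 1) with hx'
  have hxu : x' u = x u + 1 := Function.update_self _ _ _
  have hx'i : ∀ i, i ≠ u → x' i = x i := fun i h => Function.update_of_ne h _ _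
  -- next ages unchanged when scheduling u
  have hna_u : nextAges x' lam (some u) = nextAges x lam (some u) := by
    funext i
    unfold nextAges
    by_cases h : i = u
    · subst h; simp [hu]
    · have h1 : ¬ (some u = some i ∧ lam i = true) := by
        intro hc; exact h (Option.some.inj hc.1).symm
      simp only [h1, if_false, hx'i i h]
  -- sum of ages increases by 1
  have hsum : (∑ i, ((x' i : ℝ) + 1)) = (∑ i, ((x i : ℝ) + 1)) + 1 := by
    have heach : ∀ i : Fin N, ((x' i : ℝ) + 1) =
        ((x i : ℝ) + 1) + (if i = u then (1 : ℝ) else 0) := by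
      intro i
      by_cases h : i = u
      · subst h; rw [hxu, if_pos rfl]; push_cast; ring
      · rw [hx'i i h]; simp [h]
    rw [Finset.sum_congr rfl (fun i _ => heach i), Finset.sum_add_distrib,
      Finset.sum_ite_eq' Finset.univ u (fun _ => (1 : ℝ))]
    simp
  have hmd : ∀ (y : Fin N → ℕ) (d : Fin N), mdpCost y lam (some d) =
      (∑ i, ((y i : ℝ) + 1)) - (if lam d = true then (y d : ℝ) else 0) :=
    fun _ _ => rfl
  have hcost_u : mdpCost x' lam (some u) = mdpCost x lam (some u) := by
    rw [hmd, hmd, hsum]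
    simp only [hu, if_true, hxu]
    push_cast; ring
  have hcost_j : mdpCost x' lam (some j) = mdpCost x lam (some j) + 1 := by
    rw [hmd, hmd, hsum, hx'i j hj]
    ring
  -- next ages pointwise larger when scheduling j
  have hna_j : ∀ lam' : Fin N → Bool,
      V (nextAges x lam (some j)) lam' ≤ V (nextAges x' lam (some j)) lam' := by
    intro lam'
    apply hmono lam' u
    · intro i hi
      unfold nextAges
      by_cases h : some j = some i ∧ lam i = true
      · simp [h]
      · simp only [h, if_false, hx'i i hi]
    · unfold nextAges
      have h1 : ¬ (some j = some u ∧ lam u = true) := by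
        intro hc
        exact hj (Option.some.inj hc.1)
      simp only [h1, if_false, hxu]
      omega
  -- weights nonnegative
  have hw : ∀ lam' : Fin N → Bool, 0 ≤ arrWeight p lam' := by
    intro lam'
    apply Finset.prod_nonneg
    intro i _
    by_cases h : lam' i = true
    · simp [h]; exact (hp i).1.le
    · simp [h]; linarith [(hp i).2]
  have hnu_u : nu p α V x' lam (some u) = nu p α V x lam (some u) := by
    unfold nu
    rw [hna_u, hcost_u]
  have hnu_j : nu p α V x lam (some j) ≤ nu p α V x' lam (some j) := by
    unfold nu
    rw [hcost_j]
    have hS : (∑ lam' : Fin N → Bool, arrWeight p lam' * V (nextAges x lam (some j)) lam')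
        ≤ ∑ lam' : Fin N → Bool, arrWeight p lam' * V (nextAges x' lam (some j)) lam' := by
      apply Finset.sum_le_sum
      intro lam' _
      exact mul_le_mul_of_nonneg_left (hna_j lam') (hw lam')
    nlinarith [mul_le_mul_of_nonneg_left hS hα0.le]
  calc nu p α V x' lam (some u) = nu p α V x lam (some u) := hnu_u
    _ ≤ nu p α V x lam (some j) := hopt j hj
    _ ≤ nu p α V x' lam (some j) := hnu_j
end
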